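/- Let n ≥ 3. Then the constant terms of the polynomials Φ_k satisfy: Φ_0(0) = −n!, Φ_1(0) = (n−1)!, and Φ_k(0) = 0 for every integer k with 2 ≤ k ≤ n/2. Consequently the free term of P_n(x) (with real coefficients f_0,…,f_n) equals n!( f_1 f_{n−1} − f_0 f_n ). -/

import Mathlib

/-! At the point 0 the rising factorials are `(0)_k = 0` for `k ≥ 1`, `(1)_k = k!`,
`(-1)_1 = -1` and `(-1)_k = 0` for `k ≥ 2`. Hence in `Φ_k(0)` and in each summand of `P_n(0)`
only the products containing a `(-1)_j` with `j ≤ 1` survive. -/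

open Polynomial

/-- Rising factorial (Pochhammer symbol): `asc x k = x (x+1) ⋯ (x+k-1)`. -/
noncomputable def asc (x : ℝ) (k : ℕ) : ℝ := (ascPochhammer ℝ k).eval x

/-- `Φ_k(x) = 2(x)_k(x)_{n-k} - (x-1)_k(x+1)_{n-k} - (x-1)_{n-k}(x+1)_k` for `k < n/2`,
and `Φ_{n/2}(x) = (x)_{n/2}² - (x-1)_{n/2}(x+1)_{n/2}` when `n` is even. -/
noncomputable def Phi (n k : ℕ) (x : ℝ) : ℝ :=
  if 2 * k = n then asc x k ^ 2 - asc (x - 1) k * asc (x + 1) k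
  else 2 * asc x k * asc x (n - k) - asc (x - 1) k * asc (x + 1) (n - k)
    - asc (x - 1) (n - k) * asc (x + 1) k

/-- The polynomial `P_n(x) = Σ_{k=0}^n f_k f_{n-k} C(n,k) [(x)_k (x)_{n-k} - (x+1)_k (x-1)_{n-k}]`,
where `(x)_k` is the rising factorial. -/
noncomputable def Ppoly (n : ℕ) (f : ℕ → ℝ) : Polynomial ℝ :=
  ∑ k ∈ Finset.range (n + 1),
    C (f k * f (n - k) * (n.choose k : ℝ)) *
      (ascPochhammer ℝ k * ascPochhammer ℝ (n - k) -
        (ascPochhammer ℝ k).comp (X + 1) * (ascPochhammer ℝ (n - k)).comp (X - 1))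

open Finset Nat

@[simp]
lemma asc_zero_right (x : ℝ) : asc x 0 = 1 := by
  simp [asc]

lemma asc_zero_left {k : ℕ} (hk : k ≠ 0) : asc 0 k = 0 :=
  ascPochhammer_ne_zero_eval_zero ℝ hk

lemma asc_one_left (k : ℕ) : asc 1 k = k ! :=
  ascPochhammer_eval_one ℝ k

lemma asc_neg_one_one : asc (-1) 1 = -1 := by
  simp [asc]

lemma asc_neg_one_left {k : ℕ} (hk : 2 ≤ k) : asc (-1) k = 0 := by
  simpa only [asc, Nat.cast_one] using ascPochhammer_eval_neg_coe_nat_of_lt (R := ℝ) (k := 1) hk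

lemma Phi_zero_zero {n : ℕ} (hn : 2 ≤ n) : Phi n 0 0 = -(n ! : ℝ) := by
  rw [Phi, if_neg (by omega)]
  norm_num [asc_zero_left (k := n) (by omega), asc_neg_one_left hn, asc_one_left]

lemma Phi_one_zero {n : ℕ} (hn : 3 ≤ n) : Phi n 1 0 = ((n - 1)! : ℝ) := by
  rw [Phi, if_neg (by omega)]
  norm_num [asc_zero_left (k := 1) one_ne_zero, asc_neg_one_one, asc_one_left,
    asc_neg_one_left (k := n - 1) (by omega)]

lemma Phi_eq_zero_of_two_le {n k : ℕ} (hk : 2 ≤ k) (hkn : 2 * k ≤ n) : Phi n k 0 = 0 := by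
  have h0k : asc 0 k = 0 := asc_zero_left (by omega)
  have hk' : asc (-1) k = 0 := asc_neg_one_left hk
  unfold Phi
  split_ifs
  · norm_num [h0k, hk']
  · norm_num [h0k, hk', asc_neg_one_left (k := n - k) (by omega)]

lemma asc_zero_mul_asc_zero_sub {n : ℕ} (hn : n ≠ 0) (k : ℕ) : asc 0 k * asc 0 (n - k) = 0 := by
  rcases eq_or_ne k 0 with rfl | hk
  · simp [asc_zero_left hn]
  · simp [asc_zero_left hk]

lemma Ppoly_eval_zero {n : ℕ} (hn : n ≠ 0) (f : ℕ → ℝ) :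
    (Ppoly n f).eval 0 =
      -∑ k ∈ range (n + 1), f k * f (n - k) * n.choose k * (k ! * asc (-1) (n - k)) := by
  rw [Ppoly, eval_finsetSum, ← sum_neg_distrib]
  refine sum_congr rfl fun k _ => ?_
  have h : (ascPochhammer ℝ k).eval 0 * (ascPochhammer ℝ (n - k)).eval 0 = 0 :=
    asc_zero_mul_asc_zero_sub hn k
  simp [eval_comp, h, asc]

lemma Ppoly_coeff_zero {n : ℕ} (hn : n ≠ 0) (f : ℕ → ℝ) :
    (Ppoly n f).coeff 0 = (n ! : ℝ) * (f 1 * f (n - 1) - f 0 * f n) := by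
  obtain ⟨m, rfl⟩ : ∃ m, n = m + 1 := exists_eq_succ_of_ne_zero hn
  have hvanish : ∀ k ∈ range m,
      f k * f (m + 1 - k) * (m + 1).choose k * (k ! * asc (-1) (m + 1 - k)) = 0 := by
    intro k hk
    rw [asc_neg_one_left (by simp at hk; omega), mul_zero, mul_zero]
  rw [coeff_zero_eq_eval_zero, Ppoly_eval_zero hn, sum_range_succ, sum_range_succ,
    sum_eq_zero hvanish, show m + 1 - m = 1 by omega, Nat.sub_self, choose_succ_self_right,
    choose_self, asc_neg_one_one, asc_zero_right, factorial_succ]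
  push_cast
  ring

theorem Phi_constant_terms_and_free_term
    (n : ℕ) (hn : 3 ≤ n) (f : ℕ → ℝ) :
    Phi n 0 0 = -(n.factorial : ℝ) ∧
    Phi n 1 0 = ((n - 1).factorial : ℝ) ∧
    (∀ k, 2 ≤ k → 2 * k ≤ n → Phi n k 0 = 0) ∧
    (Ppoly n f).coeff 0 = (n.factorial : ℝ) * (f 1 * f (n - 1) - f 0 * f n) :=
  ⟨Phi_zero_zero (by omega), Phi_one_zero hn, fun _ hk hkn => Phi_eq_zero_of_two_le hk hkn,
    Ppoly_coeff_zero (by omega) f⟩
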